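/- arXiv:1808.04387 — 2 statements merged into one kernel-verified Lean document; each statement's English description precedes it below -/
import Mathlib

section
/- Let p be an odd prime and q ≥ 2 an integer, and suppose 2p = (q^d − 1)/(q − 1) for some integer d ≥ 2. Then d = 2 and 2p = q + 1. -/
/-!
Reducing modulo 2, the sum `1 + q + ⋯ + q^{d-1}` is `1` when `q` is even and `d` when `q` is odd,
so its evenness forces `d = 2e`. Then it factors as `(1 + q + ⋯ + q^{e-1}) (1 + q^e)`, and for
`e ≥ 2` both factors exceed `2`, which is impossible for a product equal to `2p`.
-/

open Finset

theorem Nat.even_of_two_dvd_geom_sum {q n : ℕ} (h : 2 ∣ ∑ i ∈ range n, q ^ i) : Even n := by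
  have hsum : ∑ i ∈ range n, (q : ZMod 2) ^ i = 0 := by
    exact_mod_cast (ZMod.natCast_eq_zero_iff_even.mpr (even_iff_two_dvd.mpr h))
  rw [← ZMod.natCast_eq_zero_iff_even]
  obtain hq | hq : (q : ZMod 2) = 0 ∨ (q : ZMod 2) = 1 :=
    (Nat.even_or_odd q).imp ZMod.natCast_eq_zero_iff_even.mpr ZMod.natCast_eq_one_iff_odd.mpr
  · rcases n with _ | n
    · simp
    · rw [hq, zero_geom_sum] at hsum
      simp at hsum
  · rwa [hq, one_geom_sum] at hsum

theorem geom_sum_two_mul {R : Type*} [CommSemiring R] (x : R) (e : ℕ) :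
    ∑ i ∈ range (2 * e), x ^ i = (∑ i ∈ range e, x ^ i) * (1 + x ^ e) := by
  rw [two_mul, sum_range_add, mul_add, mul_one, sum_mul]
  simp only [pow_add, mul_comm]

theorem Nat.Prime.dvd_or_dvd_of_mul_eq_mul {p m a b : ℕ} (hp : p.Prime) (h : m * p = a * b) :
    a ∣ m ∨ b ∣ m := by
  rcases hp.dvd_mul.mp (h ▸ dvd_mul_left p m) with ⟨k, rfl⟩ | ⟨k, rfl⟩
  · exact .inr ⟨k, Nat.eq_of_mul_eq_mul_left hp.pos (by linarith)⟩
  · exact .inl ⟨k, Nat.eq_of_mul_eq_mul_left hp.pos (by linarith)⟩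

theorem stmt_8_general (p q d : ℕ) (hp : p.Prime) (hq : 2 ≤ q) (hd : 2 ≤ d)
    (h : 2 * p = ∑ i ∈ Finset.range d, q ^ i) :
    d = 2 ∧ 2 * p = q + 1 := by
  obtain ⟨e, rfl⟩ : ∃ e, d = 2 * e :=
    (Nat.even_of_two_dvd_geom_sum (h ▸ dvd_mul_right 2 p)).two_dvd
  obtain rfl | he : e = 1 ∨ 2 ≤ e := by omega
  · simpa [geom_sum_two, add_comm] using h
  exfalso
  rw [geom_sum_two_mul] at h
  have hfirst : 2 < ∑ i ∈ range e, q ^ i := calc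
    2 < ∑ i ∈ range 2, q ^ i := by rw [geom_sum_two]; omega
    _ ≤ ∑ i ∈ range e, q ^ i := sum_le_sum_of_subset (range_subset_range.mpr he)
  have hsecond : 2 < 1 + q ^ e := by
    have := Nat.le_self_pow (n := e) (by omega) q
    omega
  rcases hp.dvd_or_dvd_of_mul_eq_mul h with hdvd | hdvd <;>
    linarith [Nat.le_of_dvd two_pos hdvd]

/-- If p is an odd prime, q ≥ 2 and 2p = (q^d−1)/(q−1) with d ≥ 2, then
d = 2 and 2p = q + 1. -/
theorem stmt_8 (p q d : ℕ) (hp : p.Prime) (hodd : Odd p) (hq : 2 ≤ q) (hd : 2 ≤ d)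
    (h : 2 * p = ∑ i ∈ Finset.range d, q ^ i) :
    d = 2 ∧ 2 * p = q + 1 :=
  stmt_8_general p q d hp hq hd h
end

section
/- Let G be a finite group acting faithfully on a finite set Ω such that all point stabilizers are maximal subgroups of G, and suppose B ⊆ Ω is a base for G (the pointwise stabilizer of B is trivial). Then there exists a maximal irredundant family of maximal subgroups of G of size at most |B|; in particular Mindim(G) ≤ b(G). -/
/-! The stabilizers of the points of a base intersect trivially. Among the subfamilies of
this family with trivial intersection take a minimal one: it is irredundant by minimality,
and maximal irredundant because every larger family contains it, so the larger family has
the same (trivial) intersection as one of its proper subfamilies. -/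

namespace Finset

variable {α : Type*} [SemilatticeInf α] [OrderTop α]

def IsIrredundant (M : Finset α) : Prop :=
  ∀ N ⊂ M, N.inf id ≠ M.inf id

theorem exists_subset_isIrredundant_inf_eq [DecidableEq α] (S : Finset α) :
    ∃ N ⊆ S, N.IsIrredundant ∧ N.inf id = S.inf id := by
  obtain ⟨N, hN⟩ :=
    (S.powerset.filter fun N => N.inf id = S.inf id).exists_minimal ⟨S, by simp⟩
  obtain ⟨hNS, hNinf⟩ := mem_filter.1 hN.prop
  refine ⟨N, mem_powerset.1 hNS, fun N' hN' hinf => ?_, hNinf⟩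
  have hN'mem : N' ∈ S.powerset.filter fun N => N.inf id = S.inf id :=
    mem_filter.2 ⟨mem_powerset.2 (hN'.subset.trans (mem_powerset.1 hNS)), hinf.trans hNinf⟩
  exact hN'.not_subset (hN.2 hN'mem hN'.subset)

theorem not_isIrredundant_of_inf_eq_bot_of_ssubset [OrderBot α] {M M' : Finset α}
    (hM : M.inf id = ⊥) (hMM' : M ⊂ M') : ¬ M'.IsIrredundant := fun hirr =>
  hirr M hMM' (hM.trans (eq_bot_iff.2 (hM ▸ inf_mono hMM'.subset)).symm)

end Finset

theorem MulAction.finset_inf_stabilizer_eq_bot {G Ω : Type*} [Group G] [MulAction G Ω]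
    {B : Finset Ω} (hB : ∀ g : G, (∀ ω ∈ B, g • ω = ω) → g = 1) :
    B.inf (stabilizer G) = ⊥ :=
  eq_bot_iff.2 fun g hg => hB g fun _ hω => Finset.inf_le (f := stabilizer G) hω hg

theorem stmt_17_general {G Ω : Type*} [Group G] [MulAction G Ω]
    (hmax : ∀ ω : Ω, IsCoatom (MulAction.stabilizer G ω))
    (B : Finset Ω) (hB : ∀ g : G, (∀ ω ∈ B, g • ω = ω) → g = 1) :
    ∃ M : Finset (Subgroup G),
      (∀ H ∈ M, IsCoatom H) ∧
      (∀ N ⊂ M, N.inf id ≠ M.inf id) ∧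
      (∀ M' : Finset (Subgroup G), M ⊂ M' → (∀ H ∈ M', IsCoatom H) →
        ¬ (∀ N ⊂ M', N.inf id ≠ M'.inf id)) ∧
      M.card ≤ B.card := by
  classical
  obtain ⟨M, hMS, hirr, hinf⟩ :=
    (B.image (MulAction.stabilizer G)).exists_subset_isIrredundant_inf_eq
  rw [Finset.inf_image, Function.id_comp, MulAction.finset_inf_stabilizer_eq_bot hB] at hinf
  refine ⟨M, fun H hH => ?_, hirr,
    fun M' hMM' _ => Finset.not_isIrredundant_of_inf_eq_bot_of_ssubset hinf hMM',
    (Finset.card_le_card hMS).trans Finset.card_image_le⟩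
  obtain ⟨ω, -, rfl⟩ := Finset.mem_image.1 (hMS hH)
  exact hmax ω

/-- If G acts faithfully with maximal point stabilizers and B is a base, then
G has a maximal irredundant family of maximal subgroups of size at most |B|;
in particular Mindim(G) ≤ b(G). -/
theorem stmt_17 {G Ω : Type*} [Group G] [Finite G] [Finite Ω] [MulAction G Ω]
    (hfaith : ∀ g : G, (∀ ω : Ω, g • ω = ω) → g = 1)
    (hmax : ∀ ω : Ω, IsCoatom (MulAction.stabilizer G ω))
    (B : Finset Ω) (hB : ∀ g : G, (∀ ω ∈ B, g • ω = ω) → g = 1) :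
    ∃ M : Finset (Subgroup G),
      (∀ H ∈ M, IsCoatom H) ∧
      (∀ N ⊂ M, N.inf id ≠ M.inf id) ∧
      (∀ M' : Finset (Subgroup G), M ⊂ M' → (∀ H ∈ M', IsCoatom H) →
        ¬ (∀ N ⊂ M', N.inf id ≠ M'.inf id)) ∧
      M.card ≤ B.card :=
  stmt_17_general hmax B hB
end
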